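/- Let (M, m₀) and (Y, y₀) be pointed topological spaces and A an abelian group regarded as a discrete space. If M and Y are pointed homotopy equivalent (there exist pointed continuous maps f : M → Y and h : Y → M with h ∘ f pointed-homotopic to id_M and f ∘ h pointed-homotopic to id_Y), then Sym(M;A) and Sym(Y;A) are pointed homotopy equivalent, with Sym(f;A) and Sym(h;A) forming an inverse pair of homotopy equivalences. -/

import Mathlib

/-- Underlying set of the infinite symmetric product: finitely supported
labelings of `M` by `A` vanishing at the basepoint `m₀`. -/
def SymProd (M : Type) (A : Type) [AddCommGroup A] (m₀ : M) : Type := {l : M →₀ A // l m₀ = 0}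

/-- The structure maps `Mⁿ × Aⁿ → SymProd(M;A)`. -/
noncomputable def symF (M : Type) (A : Type) [AddCommGroup A] (m₀ : M) (n : ℕ)
    (c : Fin n → M) (a : Fin n → A) : SymProd M A m₀ :=
  ⟨(∑ i, Finsupp.single (c i) (a i)) - Finsupp.single m₀ ((∑ i, Finsupp.single (c i) (a i)) m₀),
    by simp⟩

/-- The topology on `SymProd(M;A)`: the finest topology making all structure maps
continuous, where `Mⁿ` has the product topology and `Aⁿ` the product of discrete
topologies. -/
noncomputable instance symTop (M : Type) [TopologicalSpace M] (A : Type) [AddCommGroup A]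
    (m₀ : M) : TopologicalSpace (SymProd M A m₀) :=
  ⨆ n : ℕ, TopologicalSpace.coinduced
    (fun p : (Fin n → M) × (Fin n → A) => symF M A m₀ n p.1 p.2)
    (@instTopologicalSpaceProd _ _ inferInstance
      (@Pi.topologicalSpace (Fin n) (fun _ => A) (fun _ => ⊥)))

/-- The basepoint of `SymProd(M;A)`: the zero labeling. -/
def symZero (M : Type) (A : Type) [AddCommGroup A] (m₀ : M) : SymProd M A m₀ := ⟨0, by simp⟩

/-- The pushforward `SymProd(f;A)` of a pointed map `f`. -/
noncomputable def symMap {M Y : Type} (A : Type) [AddCommGroup A] (f : M → Y)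
    (m₀ : M) (y₀ : Y) (l : SymProd M A m₀) : SymProd Y A y₀ :=
  ⟨Finsupp.mapDomain f l.1 - Finsupp.single y₀ (Finsupp.mapDomain f l.1 y₀), by simp⟩

/-- Pointed homotopy of pointed maps. -/
def PtdHomotopic {X Y : Type} [TopologicalSpace X] [TopologicalSpace Y]
    (x₀ : X) (y₀ : Y) (f g : X → Y) : Prop :=
  ∃ H : X × unitInterval → Y, Continuous H ∧ (∀ x, H (x, 0) = f x) ∧ (∀ x, H (x, 1) = g x) ∧
    ∀ t, H (x₀, t) = y₀

/-!
`Sym(-;A)` is functorial on pointed maps, so everything reduces to showing that a pointed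
homotopy `H : M × I → Y` induces a pointed homotopy `(l, t) ↦ Sym(H(·, t);A) l`. Its continuity
can be tested on the structure maps: the disjoint union `Σ n, Mⁿ × Aⁿ → Sym(M;A)` of the `fₙ` is a
quotient map, and stays one after taking the product with the locally compact space `I`. On the
`n`-th piece the map is `fₙ ∘ (H(·, t))ⁿ`, which is continuous.
-/

section Algebra

variable {M Y Z A : Type} [AddCommGroup A]

theorem symMap_symF (f : M → Y) {m₀ : M} {y₀ : Y} (hf₀ : f m₀ = y₀) (n : ℕ)
    (c : Fin n → M) (a : Fin n → A) :
    symMap A f m₀ y₀ (symF M A m₀ n c a) = symF Y A y₀ n (f ∘ c) a := by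
  apply Subtype.ext
  simp only [symMap, symF, Finsupp.mapDomain_sub, Finsupp.mapDomain_finsetSum,
    Finsupp.mapDomain_single, hf₀, Function.comp_apply, Finsupp.sub_apply,
    Finsupp.single_eq_same, Finsupp.single_sub]
  abel

theorem symMap_comp (f : M → Y) (g : Y → Z) {m₀ : M} {y₀ : Y} {z₀ : Z} (hg₀ : g y₀ = z₀) :
    symMap A g y₀ z₀ ∘ symMap A f m₀ y₀ = symMap A (g ∘ f) m₀ z₀ := by
  ext1 l
  apply Subtype.ext
  simp only [symMap, Function.comp_apply, Finsupp.mapDomain_sub, Finsupp.mapDomain_single, hg₀,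
    ← Finsupp.mapDomain_comp, Finsupp.sub_apply, Finsupp.single_eq_same, Finsupp.single_sub]
  abel

theorem symMap_id (m₀ : M) : symMap A id m₀ m₀ = id := by
  ext1 l
  apply Subtype.ext
  simp [symMap, l.2]

theorem symMap_symZero (f : M → Y) (m₀ : M) (y₀ : Y) :
    symMap A f m₀ y₀ (symZero M A m₀) = symZero Y A y₀ := by
  apply Subtype.ext
  simp [symMap, symZero]

theorem exists_symF_eq {m₀ : M} (l : SymProd M A m₀) :
    ∃ (n : ℕ) (c : Fin n → M) (a : Fin n → A), symF M A m₀ n c a = l := by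
  classical
  obtain ⟨l, hl⟩ := l
  let e := l.support.equivFin.symm
  refine ⟨l.support.card, fun i => e i, fun i => l (e i), Subtype.ext ?_⟩
  have hsum : ∑ i, Finsupp.single (e i : M) (l (e i)) = l := by
    rw [Equiv.sum_comp e fun x => Finsupp.single (x : M) (l x),
      Finset.sum_coe_sort l.support fun x => Finsupp.single x (l x)]
    exact Finsupp.sum_single l
  simp only [symF, hsum, hl, Finsupp.single_zero, sub_zero]

end Algebra

section Topology

open Topology

variable {M : Type} [TopologicalSpace M] {A : Type} [AddCommGroup A]
  [TopologicalSpace A] [DiscreteTopology A] {m₀ : M}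

theorem continuous_symF (n : ℕ) :
    Continuous fun p : (Fin n → M) × (Fin n → A) => symF M A m₀ n p.1 p.2 := by
  obtain rfl := DiscreteTopology.eq_bot (α := A)
  exact continuous_iSup_rng (i := n) continuous_coinduced_rng

theorem isQuotientMap_sigma_symF :
    IsQuotientMap fun p : Σ n : ℕ, (Fin n → M) × (Fin n → A) => symF M A m₀ p.1 p.2.1 p.2.2 := by
  refine ⟨isCoinducing_iff.2 fun s => ?_, fun l => ?_⟩
  · obtain rfl := DiscreteTopology.eq_bot (α := A)
    let : TopologicalSpace A := ⊥
    rw [isOpen_sigma_iff]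
    unfold symTop
    rw [isOpen_iSup_iff]
    rfl
  · obtain ⟨n, c, a, rfl⟩ := exists_symF_eq l
    exact ⟨⟨n, c, a⟩, rfl⟩

theorem continuous_prod_of_continuous_symF {T Z : Type} [TopologicalSpace T]
    [LocallyCompactSpace T] [TopologicalSpace Z] {g : SymProd M A m₀ × T → Z}
    (hg : ∀ n, Continuous fun q : ((Fin n → M) × (Fin n → A)) × T =>
      g (symF M A m₀ n q.1.1 q.1.2, q.2)) :
    Continuous g := by
  refine isQuotientMap_sigma_symF.continuous_lift_prod_left ?_
  exact (continuous_sigma (f := fun p : Σ n, ((Fin n → M) × (Fin n → A)) × T =>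
    g (symF M A m₀ p.1 p.2.1.1 p.2.1.2, p.2.2)) hg).comp Homeomorph.sigmaProdDistrib.continuous

end Topology

section Homotopy

variable {M Y A : Type} [TopologicalSpace M] [TopologicalSpace Y] [AddCommGroup A]
  {m₀ : M} {y₀ : Y}

theorem continuous_symMap_of_continuous_uncurry {T : Type} [TopologicalSpace T]
    [LocallyCompactSpace T] {H : M × T → Y} (hH : Continuous H) (hH₀ : ∀ t, H (m₀, t) = y₀) :
    Continuous fun q : SymProd M A m₀ × T => symMap A (fun x => H (x, q.2)) m₀ y₀ q.1 := by
  let : TopologicalSpace A := ⊥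
  have : DiscreteTopology A := ⟨rfl⟩
  have hgen (t : T) (n : ℕ) (c : Fin n → M) (a : Fin n → A) :
      symMap A (fun x => H (x, t)) m₀ y₀ (symF M A m₀ n c a) =
        symF Y A y₀ n (fun i => H (c i, t)) a :=
    symMap_symF (fun x => H (x, t)) (hH₀ t) n c a
  refine continuous_prod_of_continuous_symF fun n => ?_
  simp only [hgen]
  exact (continuous_symF n).comp <| .prodMk
    (continuous_pi fun i => hH.comp <| .prodMk ((continuous_apply i).comp <|
      continuous_fst.comp continuous_fst) continuous_snd)
    (continuous_snd.comp continuous_fst)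

theorem continuous_symMap {f : M → Y} (hf : Continuous f) (hf₀ : f m₀ = y₀) :
    Continuous (symMap A f m₀ y₀) := by
  have hconst := continuous_symMap_of_continuous_uncurry (A := A) (T := Unit)
    (hf.comp continuous_fst) fun _ => hf₀
  -- `(· :)` elaborates the composite first; unifying it against `symMap A f` would unfold `symMap`
  exact (hconst.comp (by fun_prop : Continuous fun l : SymProd M A m₀ => (l, ())) :)

theorem PtdHomotopic.symMap {k₁ k₂ : M → Y} (hk : PtdHomotopic m₀ y₀ k₁ k₂) :
    PtdHomotopic (symZero M A m₀) (symZero Y A y₀) (symMap A k₁ m₀ y₀) (symMap A k₂ m₀ y₀) := by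
  obtain ⟨H, hH, hH0, hH1, hH₀⟩ := hk
  refine ⟨fun q => _root_.symMap A (fun x => H (x, q.2)) m₀ y₀ q.1,
    continuous_symMap_of_continuous_uncurry hH hH₀, fun l => ?_, fun l => ?_,
    fun _ => symMap_symZero _ m₀ y₀⟩
  · exact congrArg (_root_.symMap A · m₀ y₀ l) (funext hH0)
  · exact congrArg (_root_.symMap A · m₀ y₀ l) (funext hH1)

end Homotopy

/-- If `(M,m₀)` and `(Y,y₀)` are pointed homotopy equivalent via an
inverse pair `f : M → Y`, `h : Y → M`, then `Sym(M;A)` and `Sym(Y;A)` are pointed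
homotopy equivalent, with `Sym(f;A)` and `Sym(h;A)` forming an inverse pair of
homotopy equivalences. -/
theorem symProd_homotopy_equivalence
    (M Y : Type) [TopologicalSpace M] [TopologicalSpace Y]
    (A : Type) [AddCommGroup A] (m₀ : M) (y₀ : Y)
    (f : M → Y) (h : Y → M) (hf : Continuous f) (hh : Continuous h)
    (hf₀ : f m₀ = y₀) (hh₀ : h y₀ = m₀)
    (hfh : PtdHomotopic m₀ m₀ (h ∘ f) id) (hhf : PtdHomotopic y₀ y₀ (f ∘ h) id) :
    Continuous (symMap A f m₀ y₀) ∧ Continuous (symMap A h y₀ m₀) ∧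
    symMap A f m₀ y₀ (symZero M A m₀) = symZero Y A y₀ ∧
    symMap A h y₀ m₀ (symZero Y A y₀) = symZero M A m₀ ∧
    PtdHomotopic (symZero M A m₀) (symZero M A m₀)
      (symMap A h y₀ m₀ ∘ symMap A f m₀ y₀) id ∧
    PtdHomotopic (symZero Y A y₀) (symZero Y A y₀)
      (symMap A f m₀ y₀ ∘ symMap A h y₀ m₀) id := by
  refine ⟨continuous_symMap hf hf₀, continuous_symMap hh hh₀, symMap_symZero f m₀ y₀,
    symMap_symZero h y₀ m₀, ?_, ?_⟩
  · simpa only [symMap_comp f h hh₀, symMap_id] using hfh.symMap (A := A)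
  · simpa only [symMap_comp h f hf₀, symMap_id] using hhf.symMap (A := A)
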